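/- arXiv:1201.4078 — 2 statements merged into one kernel-verified Lean document; each statement's English description precedes it below -/
import Mathlib

section
/- Let B be a d×d real matrix such that Bᵀ + B is negative semidefinite, and let K = ker(Bᵀ+B). Define A : K → K by Ax = P_K(Bx) and C : K → K^⊥ by Cx = P_{K⊥}(Bx), where P_K and P_{K⊥} are the orthogonal projections of ℝ^d onto K and its orthogonal complement K^⊥. Then B is Hurwitz if and only if the pair (C, A) is observable, i.e., if and only if the only x ∈ K satisfying C(exp(tA)x) = 0 for all t ∈ ℝ is x = 0. -/
open Matrix

noncomputable section

variable {d : ℕ}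

/-- A real square matrix is Hurwitz if every complex eigenvalue has negative real part. -/
def IsHurwitz (B : Matrix (Fin d) (Fin d) ℝ) : Prop :=
  ∀ μ : ℂ, μ ∈ spectrum ℂ (B.map (algebraMap ℝ ℂ)) → μ.re < 0

/-- `K = ker(Bᵀ + B)` as a subspace of `ℝ^d`. -/
def Ker (B : Matrix (Fin d) (Fin d) ℝ) : Submodule ℝ (EuclideanSpace ℝ (Fin d)) :=
  LinearMap.ker (Matrix.toEuclideanLin (Bᵀ + B))

/-- Orthogonal projection onto a subspace, as an endomorphism of the ambient space. -/
def projL (K : Submodule ℝ (EuclideanSpace ℝ (Fin d))) :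
    EuclideanSpace ℝ (Fin d) →L[ℝ] EuclideanSpace ℝ (Fin d) :=
  K.subtypeL.comp K.orthogonalProjectionOnto

/-- The map `A : K → K`, `x ↦ P_K(Bx)`, lifted to `ℝ^d` as `P_K ∘ B ∘ P_K`. -/
def Amap (B : Matrix (Fin d) (Fin d) ℝ) :
    EuclideanSpace ℝ (Fin d) →L[ℝ] EuclideanSpace ℝ (Fin d) :=
  (projL (Ker B)).comp
    ((LinearMap.toContinuousLinearMap (Matrix.toEuclideanLin B)).comp (projL (Ker B)))

/-- The map `C : K → K^⊥`, `x ↦ P_{K^⊥}(Bx)`. -/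
def Cval (B : Matrix (Fin d) (Fin d) ℝ) (x : EuclideanSpace ℝ (Fin d)) : ↥(Ker B)ᗮ :=
  (Ker B)ᗮ.orthogonalProjectionOnto (Matrix.toEuclideanLin B x)

/-! Both conditions say that `K` contains no nonzero `B`-invariant subspace. On such a subspace
`⟨Bx, x⟩ = 0`, so an eigenvector of `B` in its complexification has a purely imaginary
eigenvalue. Conversely, if `Bv = μv` with `Re μ ≥ 0`, then
`2 Re μ (‖Re v‖² + ‖Im v‖²) = ⟨(Bᵀ + B) Re v, Re v⟩ + ⟨(Bᵀ + B) Im v, Im v⟩ ≤ 0`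
forces `Re v, Im v ∈ K`, and they span a `B`-invariant subspace.
For observability: if `C exp(tA) x = 0` for all `t`, differentiating repeatedly gives
`C Aⁿ x = 0`, so `Aⁿ x = Bⁿ x` stays in `K` and these vectors span a `B`-invariant subspace of `K`.
Conversely `A = B` on a `B`-invariant subspace of `K`, so `exp(tA)` preserves it and `C` vanishes
on it. -/

theorem NormedSpace.exp_apply_mem {E : Type*} [NormedAddCommGroup E] [NormedSpace ℝ E]
    [CompleteSpace E] {V : Submodule ℝ E} (hV : IsClosed (V : Set E)) {T : E →L[ℝ] E}
    (hT : ∀ x ∈ V, T x ∈ V) {x : E} (hx : x ∈ V) : NormedSpace.exp T x ∈ V := by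
  let S : Subalgebra ℝ (E →L[ℝ] E) :=
    { carrier := {T | ∀ x ∈ V, T x ∈ V}
      mul_mem' := fun hT hT' x hx => hT _ (hT' x hx)
      add_mem' := fun hT hT' x hx => V.add_mem (hT x hx) (hT' x hx)
      algebraMap_mem' := fun c x hx => V.smul_mem c hx }
  have hS : IsClosed (S : Set (E →L[ℝ] E)) := by
    have : (S : Set (E →L[ℝ] E)) = ⋂ x ∈ V, (fun T : E →L[ℝ] E => T x) ⁻¹' V := by
      ext T
      simp only [Set.mem_iInter, Set.mem_preimage, SetLike.mem_coe]
      rfl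
    rw [this]
    exact isClosed_biInter fun x _ => hV.preimage (ContinuousLinearMap.apply ℝ E x).continuous
  rw [NormedSpace.exp_eq_tsum ℝ]
  exact tsum_mem hS (fun n => S.smul_mem (pow_mem (show T ∈ S from hT) n) _) x hx

theorem apply_pow_apply_eq_zero_of_forall_apply_exp_smul {E F : Type*} [NormedAddCommGroup E]
    [NormedSpace ℝ E] [CompleteSpace E] [NormedAddCommGroup F] [NormedSpace ℝ F]
    (L : E →L[ℝ] F) (A : E →L[ℝ] E) {x : E}
    (h : ∀ t : ℝ, L (NormedSpace.exp (t • A) x) = 0) (n : ℕ) : L ((A ^ n) x) = 0 := by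
  suffices ∀ n : ℕ, ∀ t : ℝ, L (NormedSpace.exp (t • A) ((A ^ n) x)) = 0 by
    simpa using this n 0
  intro n
  induction n with
  | zero => simpa using h
  | succ n ih =>
    intro t
    have hderiv : HasDerivAt (fun s : ℝ => L (NormedSpace.exp (s • A) ((A ^ n) x)))
        (L (NormedSpace.exp (t • A) ((A ^ (n + 1)) x))) t := by
      rw [pow_succ']
      have := (hasDerivAt_exp_smul_const A t).clm_apply (hasDerivAt_const t ((A ^ n) x))
      rw [map_zero, add_zero] at this
      exact L.hasFDerivAt.comp_hasDerivAt t this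
    rw [funext ih] at hderiv
    exact hderiv.unique (hasDerivAt_const t 0)

def Submodule.complexification {n : Type*} (V : Submodule ℝ (n → ℝ)) : Submodule ℂ (n → ℂ) where
  carrier := {v | Complex.re ∘ v ∈ V ∧ Complex.im ∘ v ∈ V}
  add_mem' ha hb := ⟨V.add_mem ha.1 hb.1, V.add_mem ha.2 hb.2⟩
  zero_mem' := ⟨V.zero_mem, V.zero_mem⟩
  smul_mem' c v hv := by
    have hre : Complex.re ∘ (c • v) = c.re • (Complex.re ∘ v) - c.im • (Complex.im ∘ v) := by
      ext i; simp
    have him : Complex.im ∘ (c • v) = c.re • (Complex.im ∘ v) + c.im • (Complex.re ∘ v) := by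
      ext i; simp
    change _ ∈ V ∧ _ ∈ V
    rw [hre, him]
    exact ⟨V.sub_mem (V.smul_mem _ hv.1) (V.smul_mem _ hv.2),
      V.add_mem (V.smul_mem _ hv.2) (V.smul_mem _ hv.1)⟩

namespace Matrix

variable {n : Type*} [Fintype n]

theorem mem_spectrum_of_mulVec_eq_smul {K : Type*} [Field K] [DecidableEq n] {A : Matrix n n K}
    {μ : K} {v : n → K} (hv : v ≠ 0) (h : A *ᵥ v = μ • v) : μ ∈ spectrum K A := by
  rw [← spectrum_toLin', ← Module.End.hasEigenvalue_iff_mem_spectrum]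
  exact Module.End.hasEigenvalue_of_hasEigenvector ⟨Module.End.mem_eigenspace_iff.mpr h, hv⟩

theorem exists_mulVec_eq_smul_of_mem_spectrum {K : Type*} [Field K] [DecidableEq n]
    {A : Matrix n n K} {μ : K} (h : μ ∈ spectrum K A) : ∃ v : n → K, v ≠ 0 ∧ A *ᵥ v = μ • v := by
  rw [← spectrum_toLin', ← Module.End.hasEigenvalue_iff_mem_spectrum] at h
  obtain ⟨v, hv, hne⟩ := h.exists_hasEigenvector
  exact ⟨v, hne, Module.End.mem_eigenspace_iff.mp hv⟩

theorem dotProduct_transpose_add_self_mulVec {R : Type*} [CommRing R] (B : Matrix n n R)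
    (x : n → R) : x ⬝ᵥ ((Bᵀ + B) *ᵥ x) = 2 * (x ⬝ᵥ (B *ᵥ x)) := by
  rw [add_mulVec, dotProduct_add, dotProduct_mulVec x Bᵀ, vecMul_transpose, dotProduct_comm]
  ring

theorem dotProduct_mulVec_add_of_rotation {R : Type*} [CommRing R] {B : Matrix n n R}
    {a b : n → R} {α β : R} (ha : B *ᵥ a = α • a - β • b) (hb : B *ᵥ b = β • a + α • b) :
    a ⬝ᵥ (B *ᵥ a) + b ⬝ᵥ (B *ᵥ b) = α * (a ⬝ᵥ a + b ⬝ᵥ b) := by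
  rw [ha, hb]
  simp only [dotProduct_sub, dotProduct_add, dotProduct_smul, smul_eq_mul, dotProduct_comm b a]
  ring

theorem mulVec_eq_zero_of_dotProduct_mulVec_eq_zero {M : Matrix n n ℝ} (hMt : Mᵀ = M)
    (hM : ∀ x, x ⬝ᵥ (M *ᵥ x) ≤ 0) {x : n → ℝ} (hx : x ⬝ᵥ (M *ᵥ x) = 0) : M *ᵥ x = 0 := by
  have hpsd : (-M).PosSemidef := .of_dotProduct_mulVec_nonneg
    (by rw [IsHermitian, conjTranspose_neg, conjTranspose_eq_transpose_of_trivial, hMt])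
    (fun y => by simpa [neg_mulVec] using hM y)
  simpa [neg_mulVec] using (hpsd.dotProduct_mulVec_zero_iff x).mp (by simpa [neg_mulVec] using hx)

theorem re_comp_map_mulVec (B : Matrix n n ℝ) (v : n → ℂ) :
    Complex.re ∘ (B.map (algebraMap ℝ ℂ) *ᵥ v) = B *ᵥ (Complex.re ∘ v) := by
  ext i
  simp [mulVec, dotProduct, Complex.re_sum]

theorem im_comp_map_mulVec (B : Matrix n n ℝ) (v : n → ℂ) :
    Complex.im ∘ (B.map (algebraMap ℝ ℂ) *ᵥ v) = B *ᵥ (Complex.im ∘ v) := by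
  ext i
  simp [mulVec, dotProduct, Complex.im_sum]

theorem mulVec_re_im_of_map_mulVec_eq_smul {B : Matrix n n ℝ} {μ : ℂ} {v : n → ℂ}
    (h : B.map (algebraMap ℝ ℂ) *ᵥ v = μ • v) :
    B *ᵥ (Complex.re ∘ v) = μ.re • (Complex.re ∘ v) - μ.im • (Complex.im ∘ v) ∧
      B *ᵥ (Complex.im ∘ v) = μ.im • (Complex.re ∘ v) + μ.re • (Complex.im ∘ v) := by
  rw [← re_comp_map_mulVec, ← im_comp_map_mulVec, h]
  constructor <;> ext i
  · simp [Complex.mul_re]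
  · simp [Complex.mul_im]
    ring

theorem dotProduct_re_add_dotProduct_im_pos {v : n → ℂ} (hv : v ≠ 0) :
    0 < (Complex.re ∘ v) ⬝ᵥ (Complex.re ∘ v) + (Complex.im ∘ v) ⬝ᵥ (Complex.im ∘ v) := by
  have hre := dotProduct_star_self_nonneg (Complex.re ∘ v)
  have him := dotProduct_star_self_nonneg (Complex.im ∘ v)
  rw [star_trivial] at hre him
  by_contra! h
  refine hv (funext fun i => Complex.ext ?_ ?_)
  · exact congrFun ((dotProduct_self_eq_zero (v := Complex.re ∘ v)).mp (by linarith)) i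
  · exact congrFun ((dotProduct_self_eq_zero (v := Complex.im ∘ v)).mp (by linarith)) i

theorem exists_map_mulVec_eq_smul_mem_complexification [DecidableEq n] {B : Matrix n n ℝ}
    {V : Submodule ℝ (n → ℝ)} (hV : V ∈ Module.End.invtSubmodule (toLin' B)) (hV0 : V ≠ ⊥) :
    ∃ μ : ℂ, ∃ v ∈ V.complexification, v ≠ 0 ∧ B.map (algebraMap ℝ ℂ) *ᵥ v = μ • v := by
  set W := V.complexification
  have hW : ∀ v ∈ W, toLin' (B.map (algebraMap ℝ ℂ)) v ∈ W := fun v hv => by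
    refine ⟨?_, ?_⟩
    · rw [toLin'_apply, re_comp_map_mulVec]; exact hV hv.1
    · rw [toLin'_apply, im_comp_map_mulVec]; exact hV hv.2
  obtain ⟨x, hxV, hx⟩ := V.exists_mem_ne_zero_of_ne_bot hV0
  have : Nontrivial W := by
    refine ⟨⟨⟨Complex.ofReal ∘ x, ?_, ?_⟩, 0, fun h => hx ?_⟩⟩
    · simpa [Function.comp_def] using hxV
    · exact V.zero_mem
    · simpa [funext_iff] using congrArg Subtype.val h
  obtain ⟨μ, hμ⟩ := Module.End.exists_eigenvalue (LinearMap.restrict _ hW)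
  obtain ⟨v, hv, hv0⟩ := hμ.exists_hasEigenvector
  refine ⟨μ, v, v.2, fun h => hv0 (Subtype.ext h), ?_⟩
  simpa [Subtype.ext_iff] using Module.End.mem_eigenspace_iff.mp hv

end Matrix

open WithLp (toLp ofLp)

theorem mem_Ker_iff {B : Matrix (Fin d) (Fin d) ℝ} {x : EuclideanSpace ℝ (Fin d)} :
    x ∈ Ker B ↔ (Bᵀ + B) *ᵥ ofLp x = 0 := by
  rw [Ker, LinearMap.mem_ker, toLpLin_apply, WithLp.toLp_eq_zero]

theorem IsHurwitz.eq_bot_of_mem_invtSubmodule_of_le_Ker {B : Matrix (Fin d) (Fin d) ℝ}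
    (hH : IsHurwitz B) {V : Submodule ℝ (EuclideanSpace ℝ (Fin d))}
    (hV : V ∈ Module.End.invtSubmodule (toEuclideanLin B)) (hVK : V ≤ Ker B) : V = ⊥ := by
  by_contra hV0
  set V' := V.map (WithLp.linearEquiv 2 ℝ (Fin d → ℝ)).toLinearMap
  have hV' : V' ∈ Module.End.invtSubmodule (toLin' B) := fun y hy =>
    (Submodule.mem_map_equiv V).mpr (hV ((Submodule.mem_map_equiv V).mp hy))
  have hV'0 : V' ≠ ⊥ := Submodule.map_eq_bot_iff.not.mpr hV0
  obtain ⟨μ, v, ⟨hre, him⟩, hv0, hv⟩ := B.exists_map_mulVec_eq_smul_mem_complexification hV' hV'0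
  have hK : ∀ y ∈ V', y ⬝ᵥ (B *ᵥ y) = 0 := fun y hy => by
    have hy' : (Bᵀ + B) *ᵥ y = 0 := mem_Ker_iff.mp (hVK ((Submodule.mem_map_equiv V).mp hy))
    have := dotProduct_transpose_add_self_mulVec B y
    rw [hy', dotProduct_zero] at this
    linarith
  obtain ⟨ha, hb⟩ := mulVec_re_im_of_map_mulVec_eq_smul hv
  have hquad := dotProduct_mulVec_add_of_rotation ha hb
  rw [hK _ hre, hK _ him, zero_add, zero_eq_mul] at hquad
  have hμ : μ.re < 0 := hH μ (mem_spectrum_of_mulVec_eq_smul hv0 hv)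
  have hpos := dotProduct_re_add_dotProduct_im_pos hv0
  rcases hquad with h | h <;> linarith

theorem isHurwitz_of_forall_invtSubmodule_le_Ker_eq_bot {B : Matrix (Fin d) (Fin d) ℝ}
    (hB : ∀ x : Fin d → ℝ, x ⬝ᵥ ((Bᵀ + B) *ᵥ x) ≤ 0)
    (h : ∀ V ∈ Module.End.invtSubmodule (toEuclideanLin B), V ≤ Ker B → V = ⊥) :
    IsHurwitz B := by
  intro μ hμ
  by_contra! hre
  obtain ⟨v, hv0, hv⟩ := exists_mulVec_eq_smul_of_mem_spectrum hμ
  obtain ⟨ha, hb⟩ := mulVec_re_im_of_map_mulVec_eq_smul hv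
  set a := Complex.re ∘ v
  set b := Complex.im ∘ v
  have hpos : 0 < a ⬝ᵥ a + b ⬝ᵥ b := dotProduct_re_add_dotProduct_im_pos hv0
  have hquad : a ⬝ᵥ ((Bᵀ + B) *ᵥ a) + b ⬝ᵥ ((Bᵀ + B) *ᵥ b) = 2 * μ.re * (a ⬝ᵥ a + b ⬝ᵥ b) := by
    rw [dotProduct_transpose_add_self_mulVec, dotProduct_transpose_add_self_mulVec]
    linear_combination 2 * dotProduct_mulVec_add_of_rotation ha hb
  have hsymm : (Bᵀ + B)ᵀ = Bᵀ + B := by rw [transpose_add, transpose_transpose, add_comm]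
  have haK := mulVec_eq_zero_of_dotProduct_mulVec_eq_zero hsymm hB (x := a)
    (by nlinarith [hB a, hB b])
  have hbK := mulVec_eq_zero_of_dotProduct_mulVec_eq_zero hsymm hB (x := b)
    (by nlinarith [hB a, hB b])
  set V := Submodule.span ℝ {toLp 2 a, toLp 2 b}
  have hV : V ∈ Module.End.invtSubmodule (toEuclideanLin B) := by
    have ha' : toLp 2 a ∈ V := Submodule.subset_span (by simp)
    have hb' : toLp 2 b ∈ V := Submodule.subset_span (by simp)
    rw [Module.End.mem_invtSubmodule, Submodule.span_le]
    rintro _ (rfl | rfl) <;> simp only [SetLike.mem_coe, Submodule.mem_comap, toLpLin_toLp,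
      toLin'_apply, ha, hb, WithLp.toLp_sub, WithLp.toLp_add, WithLp.toLp_smul]
    · exact V.sub_mem (V.smul_mem _ ha') (V.smul_mem _ hb')
    · exact V.add_mem (V.smul_mem _ ha') (V.smul_mem _ hb')
  have hVK : V ≤ Ker B := by
    rw [Submodule.span_le]
    rintro _ (rfl | rfl) <;> exact mem_Ker_iff.mpr ‹_›
  have hab := Submodule.span_eq_bot.mp (h V hV hVK)
  have ha0 : a = 0 := (WithLp.toLp_eq_zero 2).mp (hab _ (by simp))
  have hb0 : b = 0 := (WithLp.toLp_eq_zero 2).mp (hab _ (by simp))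
  rw [ha0, hb0, dotProduct_zero, add_zero] at hpos
  exact lt_irrefl 0 hpos

theorem projL_apply_of_mem {K : Submodule ℝ (EuclideanSpace ℝ (Fin d))}
    {x : EuclideanSpace ℝ (Fin d)} (hx : x ∈ K) : projL K x = x :=
  congrArg Subtype.val (K.orthogonalProjectionOnto_mem_subspace_eq_self ⟨x, hx⟩)

theorem Amap_apply_mem (B : Matrix (Fin d) (Fin d) ℝ) (x : EuclideanSpace ℝ (Fin d)) :
    Amap B x ∈ Ker B :=
  Subtype.prop _

theorem Amap_apply_of_mem {B : Matrix (Fin d) (Fin d) ℝ} {x : EuclideanSpace ℝ (Fin d)}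
    (hx : x ∈ Ker B) (hBx : toEuclideanLin B x ∈ Ker B) : Amap B x = toEuclideanLin B x := by
  change projL (Ker B) (toEuclideanLin B (projL (Ker B) x)) = _
  rw [projL_apply_of_mem hx, projL_apply_of_mem hBx]

theorem Cval_eq_zero_iff {B : Matrix (Fin d) (Fin d) ℝ} {x : EuclideanSpace ℝ (Fin d)} :
    Cval B x = 0 ↔ toEuclideanLin B x ∈ Ker B := by
  rw [Cval, Submodule.orthogonalProjectionOnto_eq_zero_iff, Submodule.orthogonal_orthogonal]

theorem Cval_exp_smul_Amap_eq_zero {B : Matrix (Fin d) (Fin d) ℝ}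
    {V : Submodule ℝ (EuclideanSpace ℝ (Fin d))}
    (hV : V ∈ Module.End.invtSubmodule (toEuclideanLin B)) (hVK : V ≤ Ker B)
    {x : EuclideanSpace ℝ (Fin d)} (hx : x ∈ V) (t : ℝ) :
    Cval B (NormedSpace.exp (t • Amap B) x) = 0 := by
  have hA : ∀ y ∈ V, (t • Amap B) y ∈ V := fun y hy => by
    rw [_root_.smul_apply, Amap_apply_of_mem (hVK hy) (hVK (hV hy))]
    exact V.smul_mem t (hV hy)
  exact Cval_eq_zero_iff.mpr
    (hVK (hV (NormedSpace.exp_apply_mem V.closed_of_finiteDimensional hA hx)))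

theorem exists_invtSubmodule_le_Ker_of_Cval_pow_Amap {B : Matrix (Fin d) (Fin d) ℝ}
    {x : EuclideanSpace ℝ (Fin d)} (hx : x ∈ Ker B) (hC : ∀ n : ℕ, Cval B ((Amap B ^ n) x) = 0) :
    ∃ V ∈ Module.End.invtSubmodule (toEuclideanLin B), V ≤ Ker B ∧ x ∈ V := by
  have hK : ∀ n : ℕ, (Amap B ^ n) x ∈ Ker B
    | 0 => hx
    | n + 1 => by rw [pow_succ']; exact Amap_apply_mem B _
  have hBA : ∀ n : ℕ, toEuclideanLin B ((Amap B ^ n) x) = (Amap B ^ (n + 1)) x := fun n => by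
    rw [pow_succ', mul_apply_eq_comp, Amap_apply_of_mem (hK n) (Cval_eq_zero_iff.mp (hC n))]
  refine ⟨Submodule.span ℝ (Set.range fun n => (Amap B ^ n) x), ?_, ?_, ?_⟩
  · rw [Module.End.mem_invtSubmodule, Submodule.span_le]
    rintro _ ⟨n, rfl⟩
    rw [SetLike.mem_coe, Submodule.mem_comap, hBA]
    exact Submodule.subset_span ⟨n + 1, rfl⟩
  · rw [Submodule.span_le]
    rintro _ ⟨n, rfl⟩
    exact hK n
  · exact Submodule.subset_span ⟨0, by simp⟩

theorem observable_iff_forall_invtSubmodule_le_Ker_eq_bot (B : Matrix (Fin d) (Fin d) ℝ) :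
    (∀ x ∈ Ker B, (∀ t : ℝ, Cval B (NormedSpace.exp (t • Amap B) x) = 0) → x = 0) ↔
      ∀ V ∈ Module.End.invtSubmodule (toEuclideanLin B), V ≤ Ker B → V = ⊥ := by
  refine ⟨fun hobs V hV hVK => ?_, fun h x hx hC => ?_⟩
  · exact (Submodule.eq_bot_iff V).mpr fun x hxV =>
      hobs x (hVK hxV) (Cval_exp_smul_Amap_eq_zero hV hVK hxV)
  · have hCn := apply_pow_apply_eq_zero_of_forall_apply_exp_smul
      ((Ker B)ᗮ.orthogonalProjectionOnto.comp (toEuclideanLin B).toContinuousLinearMap) _ hC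
    obtain ⟨V, hV, hVK, hxV⟩ := exists_invtSubmodule_le_Ker_of_Cval_pow_Amap hx hCn
    exact (Submodule.eq_bot_iff V).mp (h V hV hVK) x hxV

/-- If `Bᵀ + B` is negative semidefinite then `B` is Hurwitz if and
only if the pair `(C, A)` is observable: the only `x ∈ K` with `C(exp(tA)x) = 0` for
all `t ∈ ℝ` is `x = 0`. -/
theorem isHurwitz_iff_pair_observable (B : Matrix (Fin d) (Fin d) ℝ)
    (hB : ∀ x : Fin d → ℝ, x ⬝ᵥ ((Bᵀ + B) *ᵥ x) ≤ 0) :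
    IsHurwitz B ↔
      ∀ x ∈ Ker B,
        (∀ t : ℝ, Cval B (NormedSpace.exp (t • Amap B) x) = 0) → x = 0 := by
  rw [observable_iff_forall_invtSubmodule_le_Ker_eq_bot]
  exact ⟨fun hH _ => hH.eq_bot_of_mem_invtSubmodule_of_le_Ker,
    isHurwitz_of_forall_invtSubmodule_le_Ker_eq_bot hB⟩
end
end

section
/- Consider the 2×2 real matrices B₀ = [[−1, −1],[1, −1]] and B₁ = [[−1, −3−2√2],[3−2√2, −1]]. Then: (i) the symmetric positive definite matrix P = [[1, 0],[0, 3+2√2]] satisfies B₀ᵀP + PB₀ ≤ 0 and B₁ᵀP + PB₁ ≤ 0 (both negative semidefinite), so P defines a common weak (non-strict) quadratic Lyapunov function; (ii) there exists no symmetric positive definite 2×2 real matrix Q such that both B₀ᵀQ + QB₀ and B₁ᵀQ + QB₁ are negative definite, i.e., the pair {B₀, B₁} admits no common strict quadratic Lyapunov function. -/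
open Matrix

noncomputable section

/-!
`P` is diagonal with positive entries, and `xᵀ(BᵢᵀP + PBᵢ)x = -2 (x₀ ∓ (1 + √2) x₁)²`,
which is never positive but vanishes on the lines spanned by `v₀ = (1 + √2, 1)` and
`v₁ = (1 + √2, -1)` respectively. For every symmetric `Q` the two Lyapunov forms
evaluated at these vectors sum to zero, so they cannot both be negative.
-/

def lyapunovForm {n : Type*} [Fintype n] (B Q : Matrix n n ℝ) (x : n → ℝ) : ℝ :=
  x ⬝ᵥ ((Bᵀ * Q + Q * B) *ᵥ x)

lemma lyapunovForm_eq_two_mul_dotProduct {n : Type*} [Fintype n] (B : Matrix n n ℝ)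
    {Q : Matrix n n ℝ} (hQ : Q.IsSymm) (x : n → ℝ) :
    lyapunovForm B Q x = 2 * ((B *ᵥ x) ⬝ᵥ (Q *ᵥ x)) := by
  have hBQ : x ⬝ᵥ ((Bᵀ * Q) *ᵥ x) = (B *ᵥ x) ⬝ᵥ (Q *ᵥ x) := by
    rw [← mulVec_mulVec, dotProduct_mulVec, vecMul_transpose]
  have hQB : x ⬝ᵥ ((Q * B) *ᵥ x) = (B *ᵥ x) ⬝ᵥ (Q *ᵥ x) := by
    rw [← mulVec_mulVec, dotProduct_mulVec, ← mulVec_transpose, hQ.eq, dotProduct_comm]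
  rw [lyapunovForm, add_mulVec, dotProduct_add, hBQ, hQB, two_mul]

lemma lyapunovForm_fin_two (a b c d p q r : ℝ) (x : Fin 2 → ℝ) :
    lyapunovForm !![a, b; c, d] !![p, q; q, r] x =
      2 * ((a * x 0 + b * x 1) * (p * x 0 + q * x 1) +
        (c * x 0 + d * x 1) * (q * x 0 + r * x 1)) := by
  have hsymm : (!![p, q; q, r]).IsSymm :=
    IsSymm.ext fun i j => by fin_cases i <;> fin_cases j <;> rfl
  rw [lyapunovForm_eq_two_mul_dotProduct _ hsymm, vec2_dotProduct, mulVec_fin_two, mulVec_fin_two]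
  rfl

namespace Mason

def B₀ : Matrix (Fin 2) (Fin 2) ℝ := !![-1, -1; 1, -1]

def B₁ : Matrix (Fin 2) (Fin 2) ℝ := !![-1, -3 - 2 * Real.sqrt 2; 3 - 2 * Real.sqrt 2, -1]

def P : Matrix (Fin 2) (Fin 2) ℝ := !![1, 0; 0, 3 + 2 * Real.sqrt 2]

lemma sqrt_two_sq : Real.sqrt 2 ^ 2 = 2 := Real.sq_sqrt zero_le_two

lemma P_posDef : P.PosDef := by
  rw [P, ← diagonal_vec2]
  have hpos : (0 : ℝ) < 3 + 2 * Real.sqrt 2 := by positivity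
  exact PosDef.diagonal (Fin.forall_fin_two.2 ⟨one_pos, hpos⟩)

lemma lyapunovForm_B₀_P (x : Fin 2 → ℝ) :
    lyapunovForm B₀ P x = -2 * (x 0 - (1 + Real.sqrt 2) * x 1) ^ 2 := by
  rw [B₀, P, lyapunovForm_fin_two]
  linear_combination 2 * x 1 ^ 2 * sqrt_two_sq

lemma lyapunovForm_B₁_P (x : Fin 2 → ℝ) :
    lyapunovForm B₁ P x = -2 * (x 0 + (1 + Real.sqrt 2) * x 1) ^ 2 := by
  rw [B₁, P, lyapunovForm_fin_two]
  linear_combination (2 * x 1 ^ 2 - 8 * x 0 * x 1) * sqrt_two_sq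

/-- With `J = diag(1, -1)` one has `v₁ = Jv₀` and `B₁v₁ = -JB₀v₀`, so by
`lyapunovForm_eq_two_mul_dotProduct` the sum is `2 (B₀v₀)ᵀ(Q - JQJ)v₀`, and
`(Q - JQJ)v₀ = 2 Q₀₁ (1, 1 + √2)` is orthogonal to `B₀v₀ = (-2 - √2, √2)`. -/
lemma lyapunovForm_B₀_add_lyapunovForm_B₁ (Q : Matrix (Fin 2) (Fin 2) ℝ) (hQ : Q.IsSymm) :
    lyapunovForm B₀ Q ![1 + Real.sqrt 2, 1] + lyapunovForm B₁ Q ![1 + Real.sqrt 2, -1] = 0 := by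
  rw [B₀, B₁, eta_fin_two Q, hQ.apply 0 1, lyapunovForm_fin_two, lyapunovForm_fin_two]
  simp only [cons_val_zero, cons_val_one]
  linear_combination (4 * Q 1 1 - 4 * Real.sqrt 2 * Q 0 1) * sqrt_two_sq

end Mason

open Mason in
/-- Mason's example. For `B₀ = [[-1,-1],[1,-1]]` and
`B₁ = [[-1,-3-2√2],[3-2√2,-1]]`:
(i) the symmetric positive definite matrix `P = [[1,0],[0,3+2√2]]` satisfies
`BᵢᵀP + PBᵢ ≤ 0` for `i = 0,1` (a common weak quadratic Lyapunov function);
(ii) there is no symmetric positive definite `Q` with `BᵢᵀQ + QBᵢ < 0` for `i = 0,1`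
(no common strict quadratic Lyapunov function). -/
theorem mason_example :
    let B₀ : Matrix (Fin 2) (Fin 2) ℝ := !![-1, -1; 1, -1]
    let B₁ : Matrix (Fin 2) (Fin 2) ℝ :=
      !![-1, -3 - 2 * Real.sqrt 2; 3 - 2 * Real.sqrt 2, -1]
    let P : Matrix (Fin 2) (Fin 2) ℝ := !![1, 0; 0, 3 + 2 * Real.sqrt 2]
    (P.PosDef ∧
      (∀ x : Fin 2 → ℝ, x ⬝ᵥ ((B₀ᵀ * P + P * B₀) *ᵥ x) ≤ 0) ∧
      (∀ x : Fin 2 → ℝ, x ⬝ᵥ ((B₁ᵀ * P + P * B₁) *ᵥ x) ≤ 0)) ∧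
    ¬ ∃ Q : Matrix (Fin 2) (Fin 2) ℝ, Q.PosDef ∧
      (∀ x : Fin 2 → ℝ, x ≠ 0 → x ⬝ᵥ ((B₀ᵀ * Q + Q * B₀) *ᵥ x) < 0) ∧
      (∀ x : Fin 2 → ℝ, x ≠ 0 → x ⬝ᵥ ((B₁ᵀ * Q + Q * B₁) *ᵥ x) < 0) := by
  refine ⟨⟨P_posDef, fun x => ?_, fun x => ?_⟩, ?_⟩
  · change lyapunovForm B₀ P x ≤ 0
    rw [lyapunovForm_B₀_P]
    nlinarith [sq_nonneg (x 0 - (1 + Real.sqrt 2) * x 1)]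
  · change lyapunovForm B₁ P x ≤ 0
    rw [lyapunovForm_B₁_P]
    nlinarith [sq_nonneg (x 0 + (1 + Real.sqrt 2) * x 1)]
  · rintro ⟨Q, hQ, hB₀, hB₁⟩
    have hv : ∀ c : ℝ, c ≠ 0 → ![1 + Real.sqrt 2, c] ≠ 0 := fun c hc h =>
      hc (by simpa using congrFun h 1)
    have h₀ : lyapunovForm B₀ Q ![1 + Real.sqrt 2, 1] < 0 := hB₀ _ (hv 1 one_ne_zero)
    have h₁ : lyapunovForm B₁ Q ![1 + Real.sqrt 2, -1] < 0 := hB₁ _ (hv (-1) (by norm_num))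
    linarith [lyapunovForm_B₀_add_lyapunovForm_B₁ Q hQ.isHermitian]

end
end
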